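/- arXiv:1604.06315 — 2 statements merged into one kernel-verified Lean document; each statement's English description precedes it below -/
import Mathlib

section
/- Let ψ : M² → L⁴ be a spacelike immersion through the lightcone with η non-degenerate, and let ψ̃ = -η be the conjugate surface with its lightlike normal field η̃ = -ψ. Then the Weingarten operator of the conjugate surface satisfies Ã_η̃ = A_η⁻¹, and the η̃-second fundamental form of ψ̃ equals the η-second fundamental form of ψ: ĨI_η̃ = II_η. -/
/-- The Lorentz–Minkowski inner product on `ℝ⁴`, signature `(-,+,+,+)`. -/
def mink (u v : Fin 4 → ℝ) : ℝ := -(u 0 * v 0) + u 1 * v 1 + u 2 * v 2 + u 3 * v 3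

/-- `mink` as a bilinear map. -/
def minkB : (Fin 4 → ℝ) →ₗ[ℝ] (Fin 4 → ℝ) →ₗ[ℝ] ℝ :=
  LinearMap.mk₂ ℝ mink
    (by intros; simp [mink]; ring)
    (by intros; simp [mink]; ring)
    (by intros; simp [mink]; ring)
    (by intros; simp [mink]; ring)

/-- `mink` as a continuous bilinear map. -/
noncomputable def minkL : (Fin 4 → ℝ) →L[ℝ] (Fin 4 → ℝ) →L[ℝ] ℝ :=
  LinearMap.toContinuousLinearMap
    ((LinearMap.toContinuousLinearMap.toLinearMap) ∘ₗ minkB)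

@[simp] lemma minkL_apply (u v : Fin 4 → ℝ) : minkL u v = mink u v := rfl

lemma mink_neg_left (u v : Fin 4 → ℝ) : mink (-u) v = -mink u v := by
  simp [mink]; ring

lemma mink_comm (u v : Fin 4 → ℝ) : mink u v = mink v u := by
  simp [mink]; ring

/-- In the setting of a spacelike immersion `ψ` through the lightcone with
non-degenerate `η`, let `ψ̃ = -η` be the conjugate surface with lightlike normal field
`η̃ = -ψ`, and let `Ã = Ã_η̃` be its Weingarten operator (`dη̃(v) = -dψ̃(Ã v)`).
Then `Ã = A⁻¹` (i.e. `Ã ∘ A = A ∘ Ã = id`), and the `η̃`-second fundamental form of `ψ̃`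
equals the `η`-second fundamental form of `ψ`:
`ĨI_η̃(u,v) = -⟨dψ̃(Ã u), dψ̃(v)⟩ = -⟨dψ(A u), dψ(v)⟩ = II_η(u,v)`. -/
theorem stmt6
    (ψ η : ℝ × ℝ → Fin 4 → ℝ)
    (A Atilde : ℝ × ℝ → (ℝ × ℝ →ₗ[ℝ] ℝ × ℝ))
    (hψ : ContDiff ℝ (⊤ : ℕ∞) ψ) (hη : ContDiff ℝ (⊤ : ℕ∞) η)
    (hcone : ∀ p, mink (ψ p) (ψ p) = 0 ∧ 0 < ψ p 0)
    (hspace : ∀ p v, v ≠ 0 → 0 < mink (fderiv ℝ ψ p v) (fderiv ℝ ψ p v))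
    (hηlight : ∀ p, mink (η p) (η p) = 0)
    (hψη : ∀ p, mink (ψ p) (η p) = 1)
    (hηnormal : ∀ p v, mink (η p) (fderiv ℝ ψ p v) = 0)
    (hWein : ∀ p v, fderiv ℝ η p v = -(fderiv ℝ ψ p (A p v)))
    (hnd : ∀ p, LinearMap.det (A p) ≠ 0)
    (hWeinT : ∀ p v, fderiv ℝ (fun q => -(ψ q)) p v
      = -(fderiv ℝ (fun q => -(η q)) p (Atilde p v))) :
    ∀ p : ℝ × ℝ,
      (Atilde p) ∘ₗ (A p) = LinearMap.id ∧ (A p) ∘ₗ (Atilde p) = LinearMap.id ∧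
      ∀ u v,
        -(mink (fderiv ℝ (fun q => -(η q)) p (Atilde p u)) (fderiv ℝ (fun q => -(η q)) p v))
          = -(mink (fderiv ℝ ψ p (A p u)) (fderiv ℝ ψ p v)) := by
  intro p
  have hψd : Differentiable ℝ ψ := hψ.differentiable (by simp)
  have hηd : Differentiable ℝ η := hη.differentiable (by simp)
  set F := fderiv ℝ ψ with hFdef
  -- injectivity of dψ
  have hFinj : ∀ w : ℝ × ℝ, F p w = 0 → w = 0 := by
    intro w hw
    by_contra h
    have := hspace p w h
    rw [hw] at this
    simp [mink] at this
  -- derivative of -η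
  have hnegη : ∀ w, fderiv ℝ (fun q => -(η q)) p w = F p (A p w) := by
    intro w
    rw [fderiv_fun_neg]
    simp [hWein p w]
  -- A ∘ Atilde = id
  have hAAt : ∀ v, A p (Atilde p v) = v := by
    intro v
    have h1 := hWeinT p v
    rw [hnegη, fderiv_fun_neg] at h1
    have h2 : F p (A p (Atilde p v)) = F p v := by
      have := neg_injective h1
      change F p v = F p (A p (Atilde p v)) at this
      exact this.symm
    have h3 : F p (A p (Atilde p v) - v) = 0 := by
      rw [map_sub, h2, sub_self]
    exact sub_eq_zero.mp (hFinj _ h3)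
  have hAsurj : Function.Surjective (A p) := fun v => ⟨Atilde p v, hAAt v⟩
  have hAinj : Function.Injective (A p) :=
    (LinearMap.injective_iff_surjective (f := A p)).mpr hAsurj
  have hAtA : ∀ v, Atilde p (A p v) = v := fun v => hAinj (hAAt (A p v))
  refine ⟨LinearMap.ext hAtA, LinearMap.ext hAAt, ?_⟩
  -- second derivative and its symmetry
  have hF' : ContDiff ℝ (⊤ : ℕ∞) F := hψ.fderiv_right (by simp)
  set S := fderiv ℝ F p with hSdef
  have hS : HasFDerivAt F S p := (hF'.differentiable (by simp) p).hasFDerivAt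
  have hsym : ∀ u v, S u v = S v u := fun u v =>
    second_derivative_symmetric (fun y => (hψd y).hasFDerivAt) hS u v
  -- key identity from differentiating ⟨η, dψ v⟩ = 0
  have hkey : ∀ u v : ℝ × ℝ,
      mink (η p) (S u v) + mink (fderiv ℝ η p u) (F p v) = 0 := by
    intro u v
    have hc : HasFDerivAt (fun q => minkL (η q)) (minkL.comp (fderiv ℝ η p)) p :=
      minkL.hasFDerivAt.comp p (hηd p).hasFDerivAt
    have hu : HasFDerivAt (fun q => F q v)
        ((ContinuousLinearMap.apply ℝ (Fin 4 → ℝ) v).comp S) p :=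
      (ContinuousLinearMap.apply ℝ (Fin 4 → ℝ) v).hasFDerivAt.comp p hS
    have hφ := hc.clm_apply hu
    have h0 : (fun q => minkL (η q) (F q v)) = fun _ => (0 : ℝ) :=
      funext fun q => by simpa using hηnormal q v
    rw [h0] at hφ
    have heq := hφ.unique (hasFDerivAt_const 0 p)
    have := congrFun (congrArg DFunLike.coe heq) u
    simpa using this
  -- self-adjointness of A w.r.t. the induced metric
  have hsymA : ∀ u v : ℝ × ℝ,
      mink (F p (A p u)) (F p v) = mink (F p u) (F p (A p v)) := by
    intro u v
    have h1 : mink (F p (A p u)) (F p v) = mink (η p) (S u v) := by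
      have := hkey u v
      rw [hWein p u, mink_neg_left] at this
      linarith
    have h2 : mink (F p (A p v)) (F p u) = mink (η p) (S v u) := by
      have := hkey v u
      rw [hWein p v, mink_neg_left] at this
      linarith
    rw [h1, hsym u v, ← h2, mink_comm]
  intro u v
  rw [hnegη, hnegη, hAAt, hsymA]
end

section
/- Let K, d : M → ℝ be positive functions on a compact Riemannian 2-sphere (M, g) with d constant, such that ∫_M K dA = 4π (Gauss–Bonnet), dA' = √d dA defines the area element of a second metric with Gauss curvature K' satisfying ∫_M K' dA' = 4π, and 2K' ≥ 2K/√d pointwise. Then K' · √d = K everywhere and 2K' = K²/d everywhere (given also the pointwise chain 2K' ≥ K²/d ≥ 2K/√d). -/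
open MeasureTheory

theorem Continuous.eq_of_le_of_integral_eq {X : Type*} [TopologicalSpace X] [MeasurableSpace X]
    [OpensMeasurableSpace X] {μ : Measure X} [μ.IsOpenPosMeasure] {f g : X → ℝ}
    (hf : Continuous f) (hg : Continuous g) (hfi : Integrable f μ) (hgi : Integrable g μ)
    (hle : f ≤ g) (hint : ∫ x, f x ∂μ = ∫ x, g x ∂μ) : f = g := by
  have hzero : ∫ x, (g - f) x ∂μ = 0 := by
    rw [Pi.sub_def, integral_sub hgi hfi, hint, sub_self]
  have hae : g - f =ᵐ[μ] 0 :=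
    (integral_eq_zero_iff_of_nonneg (fun x => sub_nonneg.mpr (hle x)) (hgi.sub hfi)).mp hzero
  exact (sub_eq_zero.mp ((hg.sub hf).ae_eq_iff_eq μ continuous_const |>.mp hae)).symm

theorem stmt13_general {M : Type*} [TopologicalSpace M] [CompactSpace M]
    [MeasurableSpace M] [BorelSpace M]
    (μ : Measure M) [IsFiniteMeasure μ] [μ.IsOpenPosMeasure]
    (K K' : M → ℝ) (d : ℝ) (hd : 0 < d)
    (hKc : Continuous K) (hK'c : Continuous K')
    (hGB : ∫ p, K p ∂μ = 4 * Real.pi)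
    (hGB' : ∫ p, K' p * Real.sqrt d ∂μ = 4 * Real.pi)
    (hchain : ∀ p, 2 * K' p ≥ (K p) ^ 2 / d ∧ (K p) ^ 2 / d ≥ 2 * K p / Real.sqrt d) :
    ∀ p, K' p * Real.sqrt d = K p ∧ 2 * K' p = (K p) ^ 2 / d := by
  have hsd : 0 < Real.sqrt d := Real.sqrt_pos.mpr hd
  have hK'sc : Continuous fun p => K' p * Real.sqrt d := hK'c.mul continuous_const
  have hle : K ≤ fun p => K' p * Real.sqrt d := fun p => by
    have h := (div_le_iff₀ hsd).mp ((hchain p).2.trans (hchain p).1)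
    linarith
  have heq : K = fun p => K' p * Real.sqrt d :=
    hKc.eq_of_le_of_integral_eq hK'sc (hKc.integrable_of_hasCompactSupport (.of_compactSpace _))
      (hK'sc.integrable_of_hasCompactSupport (.of_compactSpace _)) hle (hGB.trans hGB'.symm)
  intro p
  have hK'p : K' p * Real.sqrt d = K p := (congrFun heq p).symm
  have hdouble : 2 * K' p = 2 * K p / Real.sqrt d := by
    rw [← hK'p]; field_simp
  exact ⟨hK'p, le_antisymm (hdouble ▸ (hchain p).2) (hchain p).1⟩

/-- Let `K, d` be positive data on a compact Riemannian 2-sphere `(M,g)`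
(encoded via its area measure `μ`, of full support) with `d` constant, such that
`∫ K dμ = 4π` (Gauss–Bonnet), `dA' = √d·dμ` is the area element of a second metric with
Gauss curvature `K'` satisfying `∫ K' dA' = 4π`, and pointwise
`2K' ≥ K²/d ≥ 2K/√d`. Then `K'·√d = K` and `2K' = K²/d` everywhere. -/
theorem stmt13 {M : Type*} [TopologicalSpace M] [CompactSpace M]
    [MeasurableSpace M] [BorelSpace M]
    (μ : Measure M) [IsFiniteMeasure μ] [μ.IsOpenPosMeasure]
    (K K' : M → ℝ) (d : ℝ) (hd : 0 < d)
    (hKc : Continuous K) (hK'c : Continuous K')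
    (hKpos : ∀ p, 0 < K p)
    (hGB : ∫ p, K p ∂μ = 4 * Real.pi)
    (hGB' : ∫ p, K' p * Real.sqrt d ∂μ = 4 * Real.pi)
    (hchain : ∀ p, 2 * K' p ≥ (K p) ^ 2 / d ∧ (K p) ^ 2 / d ≥ 2 * K p / Real.sqrt d) :
    ∀ p, K' p * Real.sqrt d = K p ∧ 2 * K' p = (K p) ^ 2 / d :=
  stmt13_general μ K K' d hd hKc hK'c hGB hGB' hchain
end
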